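/- Let m, k, ℓ be natural numbers with k ≤ m and ℓ ≤ m - k. For any probability distribution over the k-element subsets S of {1,...,m}, there exists an ℓ-element subset σ of {1,...,m} such that the probability that σ ∩ S is nonempty is at least 1 - C(m-k, ℓ)/C(m, ℓ). -/

import Mathlib

open scoped ENNReal

/-! Average over all ℓ-subsets σ the probability that σ misses S. A fixed k-set is missed by
exactly C(m-k, ℓ) of the C(m, ℓ) subsets, so by linearity this average is C(m-k, ℓ)/C(m, ℓ)
whatever the distribution of S, and some σ misses S with at most that probability. -/

open Finset

theorem ENNReal.exists_le_sum_div_card {ι : Type*} {A : Finset ι} (hA : A.Nonempty)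
    (f : ι → ℝ≥0∞) : ∃ i ∈ A, f i ≤ (∑ j ∈ A, f j) / #A := by
  refine ENNReal.exists_le_of_sum_le hA (le_of_eq ?_)
  rw [sum_const, nsmul_eq_mul, ENNReal.mul_div_cancel (by simpa using hA.ne_empty)
    (ENNReal.natCast_ne_top _)]

theorem Finset.card_filter_powersetCard_univ_disjoint {α : Type*} [Fintype α] [DecidableEq α]
    (s : Finset α) (ℓ : ℕ) :
    #{σ ∈ powersetCard ℓ (univ : Finset α) | Disjoint σ s} = (Fintype.card α - #s).choose ℓ := by
  have : {σ ∈ powersetCard ℓ (univ : Finset α) | Disjoint σ s} = powersetCard ℓ sᶜ := by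
    ext σ
    simp [mem_powersetCard, subset_compl_iff_disjoint_right, and_comm]
  rw [this, card_powersetCard, card_compl]

namespace PMF

variable {α : Type*} (p : PMF α)

theorem toOuterMeasure_compl (s : Set α) :
    p.toOuterMeasure sᶜ = 1 - p.toOuterMeasure s := by
  have hsum : p.toOuterMeasure s + p.toOuterMeasure sᶜ = 1 := by
    simp only [toOuterMeasure_apply, ← ENNReal.tsum_add, Set.indicator_self_add_compl_apply,
      tsum_coe]
  have hfin : p.toOuterMeasure s ≠ ∞ := by
    simpa only [toOuterMeasure_apply] using p.tsum_coe_indicator_ne_top s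
  rw [← hsum, ENNReal.add_sub_cancel_left hfin]

theorem sum_toOuterMeasure {ι : Type*} (A : Finset ι) (E : ι → Set α)
    [∀ x, DecidablePred (fun i => x ∈ E i)] :
    ∑ i ∈ A, p.toOuterMeasure (E i) = ∑' x, #{i ∈ A | x ∈ E i} * p x := by
  simp only [toOuterMeasure_apply]
  rw [← Summable.tsum_finsetSum fun _ _ => ENNReal.summable]
  refine tsum_congr fun x => ?_
  simp only [Set.indicator_apply, ← sum_filter, sum_const, nsmul_eq_mul]

theorem tsum_mul_eq_of_eq_on_support {f : α → ℝ≥0∞} {c : ℝ≥0∞}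
    (hf : ∀ x ∈ p.support, f x = c) : ∑' x, f x * p x = c := by
  calc ∑' x, f x * p x = ∑' x, c * p x := tsum_congr fun x => by
        by_cases hx : p x = 0
        · simp [hx]
        · rw [hf x hx]
    _ = c := by rw [ENNReal.tsum_mul_left, tsum_coe, mul_one]

end PMF

theorem stmt0_general (m k ℓ : ℕ) (hℓ : ℓ ≤ m - k)
    (μ : PMF (Finset (Fin m))) (hsupp : ∀ s ∈ μ.support, s.card = k) :
    ∃ σ : Finset (Fin m), σ.card = ℓ ∧
      1 - ((m - k).choose ℓ : ℝ≥0∞) / (m.choose ℓ : ℝ≥0∞) ≤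
        μ.toOuterMeasure {s | (σ ∩ s).Nonempty} := by
  have hne : (powersetCard ℓ (univ : Finset (Fin m))).Nonempty :=
    powersetCard_nonempty.2 (by simpa using hℓ.trans (m.sub_le k))
  obtain ⟨σ, hσ, hmiss⟩ :=
    ENNReal.exists_le_sum_div_card hne fun σ => μ.toOuterMeasure {s | Disjoint σ s}
  have hsum : ∑ σ ∈ powersetCard ℓ univ, μ.toOuterMeasure {s | Disjoint σ s} =
      (m - k).choose ℓ := by
    rw [μ.sum_toOuterMeasure]
    refine μ.tsum_mul_eq_of_eq_on_support fun s hs => ?_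
    simp only [Set.mem_ofPred_eq, card_filter_powersetCard_univ_disjoint, hsupp s hs,
      Fintype.card_fin]
  have hhit : {s : Finset (Fin m) | (σ ∩ s).Nonempty} = {s | Disjoint σ s}ᶜ := by
    ext s
    simp [not_disjoint_iff_nonempty_inter]
  refine ⟨σ, (mem_powersetCard.1 hσ).2, ?_⟩
  rw [hhit, μ.toOuterMeasure_compl]
  refine tsub_le_tsub_left (hmiss.trans_eq ?_) 1
  rw [hsum, card_powersetCard, card_univ, Fintype.card_fin]

theorem stmt0 (m k ℓ : ℕ) (hk : k ≤ m) (hℓ : ℓ ≤ m - k)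
    (μ : PMF (Finset (Fin m))) (hsupp : ∀ s ∈ μ.support, s.card = k) :
    ∃ σ : Finset (Fin m), σ.card = ℓ ∧
      1 - ((m - k).choose ℓ : ℝ≥0∞) / (m.choose ℓ : ℝ≥0∞) ≤
        μ.toOuterMeasure {s | (σ ∩ s).Nonempty} :=
  stmt0_general m k ℓ hℓ μ hsupp
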